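/- For p, q ∈ ℝ³ set p₀ := √(1 + |p|²), q₀ := √(1 + |q|²) and τ(p,q) := p₀ q₀ − p·q. Let r ∈ (3/2, ∞]. There exists a constant C = C(r) > 0 such that for every g ∈ L^r(ℝ³) and every p ∈ ℝ³, ∫_{ℝ³} (τ(p,q)/(p₀ q₀)) (τ(p,q)² − 1)^{−1/2} e^{−q₀/2} |g(q)| dq ≤ C ‖g‖_{L^r(ℝ³)} (the integrand, defined for q ≠ p, is integrable, so the integral is finite for every p). -/

import Mathlib

/-!
On the mass shell, `2 (τ - 1) = |q - p|² - (p₀ - q₀)²` is the squared Minkowski distance of the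
4-vectors, and comparing it with the Euclidean one gives `τ² - 1 ≥ |q - p|² / (p₀ q₀)²`. Together
with `τ ≤ 2 p₀ q₀` and `p₀ ≤ q₀ + |q - p|` this bounds the kernel by
`C e^{-|q|/4} (|q - p|⁻¹ + 1)`. The singularity `|x|⁻¹` lies in `L^s` near `0` in `ℝ³` exactly
for `s < 3`, so the kernel lies in `L^s` uniformly in `p` for every `1 ≤ s < 3`, and Hölder's
inequality with the conjugate exponent `s = r' < 3`, i.e. `r > 3/2`, gives the bound.
-/

open MeasureTheory
open scoped ENNReal

/-- Relativistic energy `p₀ = √(1 + |p|²)`. -/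
noncomputable def pZero (p : EuclideanSpace ℝ (Fin 3)) : ℝ := Real.sqrt (1 + ‖p‖ ^ 2)

/-- `τ(p,q) = p₀ q₀ - p·q`, the Lorentz inner product of the energy-momentum 4-vectors. -/
noncomputable def tauLor (p q : EuclideanSpace ℝ (Fin 3)) : ℝ :=
  pZero p * pZero q - (inner ℝ p q : ℝ)

open Real Set Metric

local notation "ℝ³" => EuclideanSpace ℝ (Fin 3)

section RadialLp

variable {E : Type*} [NormedAddCommGroup E] [NormedSpace ℝ E] [FiniteDimensional ℝ E]
  [Nontrivial E] [MeasurableSpace E] [BorelSpace E] (μ : Measure E) [μ.IsAddHaarMeasure]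

lemma memLp_exp_neg_mul_norm {c : ℝ} (hc : 0 < c) (s : ℝ≥0∞) :
    MemLp (fun x : E => exp (-c * ‖x‖)) s μ := by
  have hmeas : AEStronglyMeasurable (fun x : E => exp (-c * ‖x‖)) μ := by fun_prop
  rcases eq_or_ne s 0 with rfl | hs0
  · exact memLp_zero_iff_aestronglyMeasurable.2 hmeas
  rcases eq_or_ne s ∞ with rfl | hstop
  · exact memLp_top_of_bound hmeas 1 (.of_forall fun x => by
      rw [norm_of_nonneg (exp_pos _).le, exp_le_one_iff]
      nlinarith [norm_nonneg x])
  have hs : 0 < s.toReal := ENNReal.toReal_pos hs0 hstop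
  rw [← integrable_norm_rpow_iff hmeas hs0 hstop]
  have hradial : IntegrableOn
      (fun y : ℝ => y ^ (Module.finrank ℝ E - 1) • exp (-(c * s.toReal) * y)) (Ioi 0) := by
    refine (integrableOn_rpow_mul_exp_neg_mul_rpow (s := (Module.finrank ℝ E - 1 : ℕ))
      (b := c * s.toReal) (neg_one_lt_zero.trans_le (Nat.cast_nonneg _)) one_pos
      (by positivity)).congr_fun
      (fun y _ => ?_) measurableSet_Ioi
    dsimp only
    rw [rpow_natCast, rpow_one, smul_eq_mul]
  refine ((integrable_fun_norm_addHaar μ).2 hradial).congr (.of_forall fun x => ?_)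
  dsimp only
  rw [norm_of_nonneg (exp_pos _).le, ← exp_mul]
  ring_nf

lemma memLp_indicator_ball_norm_inv {s : ℝ≥0∞} (hs : s < Module.finrank ℝ E) (R : ℝ) :
    MemLp ((ball (0 : E) R).indicator fun x => ‖x‖⁻¹) s μ := by
  have hmeas : AEStronglyMeasurable (fun x : E => ‖x‖⁻¹) μ := by fun_prop
  rw [memLp_indicator_iff_restrict measurableSet_ball]
  rcases eq_or_ne s 0 with rfl | hs0
  · exact memLp_zero_iff_aestronglyMeasurable.2 hmeas.restrict
  have hstop : s ≠ ∞ := (hs.trans (ENNReal.natCast_lt_top _)).ne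
  rw [← integrable_norm_rpow_iff hmeas.restrict hs0 hstop]
  refine integrableOn_ball_of_norm_le_rpow Module.finrank_pos (C := 1) (α := s.toReal) ?_
    (.of_forall fun x => ?_) (hmeas.norm.aemeasurable.pow_const _).aestronglyMeasurable
  · simpa using (ENNReal.toReal_lt_toReal hstop (ENNReal.natCast_ne_top _)).2 hs
  · rw [norm_of_nonneg (by positivity), norm_inv, norm_norm, inv_rpow (norm_nonneg x),
      ← rpow_neg (norm_nonneg x), one_mul]

end RadialLp

lemma sq_mul_exp_neg_half_le {x : ℝ} (hx : 0 ≤ x) : x ^ 2 * exp (-x / 2) ≤ 64 * exp (-x / 4) := by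
  have h : x ≤ 8 * exp (x / 8) := by linarith [add_one_le_exp (x / 8), exp_pos (x / 8)]
  calc x ^ 2 * exp (-x / 2) ≤ (8 * exp (x / 8)) ^ 2 * exp (-x / 2) := by gcongr
    _ = 64 * exp (-x / 4) := by rw [mul_pow, ← exp_nat_mul, mul_assoc, ← exp_add]; ring_nf

lemma ENNReal.conjExponent_lt_three {r : ℝ≥0∞} (hr : 3 / 2 < r) : r.conjExponent < 3 := by
  have h32 : (2⁻¹ + 1 : ℝ≥0∞) = 3 / 2 := by
    rw [ENNReal.eq_div_iff (by norm_num) (by norm_num), mul_add, ENNReal.mul_inv_cancel] <;>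
      norm_num
  have h : 2⁻¹ < r - 1 := lt_tsub_iff_right.2 (h32 ▸ hr)
  calc r.conjExponent = 1 + (r - 1)⁻¹ := rfl
    _ < 1 + 2 := ENNReal.add_lt_add_left ENNReal.one_ne_top (ENNReal.inv_lt_iff_inv_lt.1 h)
    _ = 3 := by norm_num

section MassShell

variable (p q : ℝ³)

lemma pZero_sq : pZero p ^ 2 = 1 + ‖p‖ ^ 2 :=
  sq_sqrt (by positivity)

lemma one_le_pZero : 1 ≤ pZero p :=
  one_le_sqrt.2 (by nlinarith [sq_nonneg ‖p‖])

lemma pZero_pos : 0 < pZero p :=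
  one_pos.trans_le (one_le_pZero p)

lemma norm_le_pZero : ‖p‖ ≤ pZero p :=
  (le_sqrt (norm_nonneg p) (by positivity)).2 (by linarith)

lemma pZero_le_pZero_add_norm_sub : pZero p ≤ pZero q + ‖p - q‖ := by
  have h := norm_sub_norm_le p q
  rw [pZero, sqrt_le_left (by positivity [pZero_pos q]), add_sq, pZero_sq]
  nlinarith [norm_le_pZero q, norm_nonneg p, norm_nonneg q, norm_nonneg (p - q)]

lemma one_add_norm_mul_norm_le : 1 + ‖p‖ * ‖q‖ ≤ pZero p * pZero q := by
  rw [pZero, pZero, ← sqrt_mul (by positivity), le_sqrt (by positivity) (by positivity)]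
  nlinarith [sq_nonneg (‖p‖ - ‖q‖)]

lemma one_le_tauLor : 1 ≤ tauLor p q := by
  have := real_inner_le_norm p q
  have := one_add_norm_mul_norm_le p q
  rw [tauLor]; linarith

lemma tauLor_le : tauLor p q ≤ 2 * (pZero p * pZero q) := by
  have := neg_le_of_abs_le (abs_real_inner_le_norm p q)
  have := mul_le_mul (norm_le_pZero p) (norm_le_pZero q) (norm_nonneg q) (pZero_pos p).le
  rw [tauLor]; linarith

lemma tauLor_self : tauLor p p = 1 := by
  rw [tauLor, real_inner_self_eq_norm_sq, ← sq, pZero_sq]; ring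

lemma norm_sub_sq_le_tauLor_sub_one_mul :
    2 * ‖q - p‖ ^ 2 ≤ (tauLor p q - 1) * (pZero p + pZero q) ^ 2 := by
  set a := ‖p‖; set b := ‖q‖; set P := pZero p; set Q := pZero q; set d := ‖q - p‖
  have hP : P ^ 2 = 1 + a ^ 2 := pZero_sq p
  have hQ : Q ^ 2 = 1 + b ^ 2 := pZero_sq q
  have hd : d ^ 2 = a ^ 2 - 2 * inner ℝ p q + b ^ 2 := by
    rw [norm_sub_sq_real, real_inner_comm]; ring
  have hab : (b - a) ^ 2 ≤ d ^ 2 := sq_le_sq.2 ((abs_norm_sub_norm_le q p).trans (le_abs_self _))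
  have hminkowski : 2 * (tauLor p q - 1) = d ^ 2 - (P - Q) ^ 2 := by
    rw [tauLor, hd]; linear_combination hQ + hP
  have hdiff : (P - Q) ^ 2 * (P + Q) ^ 2 = (b - a) ^ 2 * (a + b) ^ 2 := by
    linear_combination (P ^ 2 - Q ^ 2 + a ^ 2 - b ^ 2) * (hP - hQ)
  have hgap : 4 ≤ (P + Q) ^ 2 - (a + b) ^ 2 := by
    nlinarith [one_add_norm_mul_norm_le p q]
  nlinarith [mul_le_mul_of_nonneg_right hab (sq_nonneg (a + b)),
    mul_le_mul_of_nonneg_left hgap (sq_nonneg d)]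

lemma norm_sub_sq_div_le_tauLor_sq_sub_one :
    ‖q - p‖ ^ 2 / (pZero p * pZero q) ^ 2 ≤ tauLor p q ^ 2 - 1 := by
  have hP := one_le_pZero p; have hQ := one_le_pZero q; have hτ := one_le_tauLor p q
  have hsum : (pZero p + pZero q) ^ 2 ≤ 4 * (pZero p * pZero q) ^ 2 := by
    have h : pZero p + pZero q ≤ 2 * (pZero p * pZero q) := by nlinarith
    nlinarith [pow_le_pow_left₀ (by positivity) h 2]
  rw [div_le_iff₀ (by positivity)]
  nlinarith [norm_sub_sq_le_tauLor_sub_one_mul p q,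
    mul_le_mul_of_nonneg_left hsum (by linarith : 0 ≤ tauLor p q - 1),
    mul_nonneg (sq_nonneg (tauLor p q - 1)) (sq_nonneg (pZero p * pZero q))]

lemma tauLor_sq_sub_one_rpow_neg_half_le :
    (tauLor p q ^ 2 - 1) ^ (-(1 / 2) : ℝ) ≤ pZero p * pZero q / ‖q - p‖ := by
  rcases eq_or_ne q p with rfl | hqp
  · simp [tauLor_self]
  have hd : 0 < ‖q - p‖ := norm_pos_iff.2 (sub_ne_zero.2 hqp)
  have hPQ : 0 < pZero p * pZero q := mul_pos (pZero_pos p) (pZero_pos q)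
  calc (tauLor p q ^ 2 - 1) ^ (-(1 / 2) : ℝ)
      ≤ ((‖q - p‖ / (pZero p * pZero q)) ^ 2) ^ (-(1 / 2) : ℝ) := by
        refine rpow_le_rpow_of_nonpos (by positivity) ?_ (by norm_num)
        simpa [div_pow] using norm_sub_sq_div_le_tauLor_sq_sub_one p q
    _ = pZero p * pZero q / ‖q - p‖ := by
        rw [rpow_neg (sq_nonneg _), ← sqrt_eq_rpow, sqrt_sq (by positivity), inv_div]

end MassShell

/-- `Λ(P,Q) e^{-q₀/2}`; it vanishes at `q = p`, where Lean's `0 ^ (-1/2)` is `0`. -/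
noncomputable def lambdaKernel (p q : ℝ³) : ℝ :=
  tauLor p q / (pZero p * pZero q) * (tauLor p q ^ 2 - 1) ^ (-(1 / 2) : ℝ)
    * Real.exp (-(pZero q) / 2)

section LambdaKernel

variable (p q : ℝ³)

lemma lambdaKernel_nonneg : 0 ≤ lambdaKernel p q := by
  have := one_le_tauLor p q; have := pZero_pos p; have := pZero_pos q
  unfold lambdaKernel
  have : 0 ≤ tauLor p q ^ 2 - 1 := by nlinarith
  positivity

lemma measurable_lambdaKernel : Measurable (lambdaKernel p) := by
  unfold lambdaKernel tauLor pZero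
  fun_prop

lemma lambdaKernel_le :
    lambdaKernel p q ≤ 2 * pZero q ^ 2 * exp (-pZero q / 2) * (‖q - p‖⁻¹ + 1) := by
  set P := pZero p; set Q := pZero q; set d := ‖q - p‖
  have hP := pZero_pos p; have hQ := one_le_pZero q
  have hratio : tauLor p q / (P * Q) ≤ 2 := by
    rw [div_le_iff₀ (by positivity)]; exact tauLor_le p q
  have hPd : P * Q / d ≤ Q ^ 2 * (d⁻¹ + 1) := by
    have hPle : P ≤ Q + d := (pZero_le_pZero_add_norm_sub p q).trans_eq (by rw [norm_sub_rev])
    have hdd : d * d⁻¹ ≤ 1 := mul_inv_le_one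
    calc P * Q / d ≤ (Q + d) * Q * d⁻¹ := by rw [div_eq_mul_inv]; gcongr
      _ = Q ^ 2 * d⁻¹ + Q * (d * d⁻¹) := by ring
      _ ≤ Q ^ 2 * (d⁻¹ + 1) := by nlinarith
  have hR := tauLor_sq_sub_one_rpow_neg_half_le p q
  have hR0 : 0 ≤ (tauLor p q ^ 2 - 1) ^ (-(1 / 2) : ℝ) :=
    rpow_nonneg (by nlinarith [one_le_tauLor p q]) _
  calc lambdaKernel p q ≤ 2 * (P * Q / d) * exp (-Q / 2) := by
        unfold lambdaKernel
        gcongr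
    _ ≤ 2 * (Q ^ 2 * (d⁻¹ + 1)) * exp (-Q / 2) := by gcongr
    _ = 2 * Q ^ 2 * exp (-Q / 2) * (d⁻¹ + 1) := by ring

lemma lambdaKernel_le_exp_add_indicator :
    lambdaKernel p q ≤
      256 * exp (-‖q‖ / 4) + 128 * (ball 0 1).indicator (fun x : ℝ³ => ‖x‖⁻¹) (q - p) := by
  have hexp : exp (-pZero q / 4) ≤ exp (-‖q‖ / 4) := by
    gcongr; exact norm_le_pZero q
  have hexp1 : exp (-‖q‖ / 4) ≤ 1 := exp_le_one_iff.2 (by linarith [norm_nonneg q])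
  have hd := norm_nonneg (q - p)
  have hK : lambdaKernel p q ≤ 128 * exp (-‖q‖ / 4) * (‖q - p‖⁻¹ + 1) := by
    calc lambdaKernel p q ≤ 2 * pZero q ^ 2 * exp (-pZero q / 2) * (‖q - p‖⁻¹ + 1) :=
          lambdaKernel_le p q
      _ ≤ 2 * (64 * exp (-‖q‖ / 4)) * (‖q - p‖⁻¹ + 1) := by
          rw [mul_assoc 2]
          gcongr 2 * ?_ * _
          exact (sq_mul_exp_neg_half_le (pZero_pos q).le).trans (by gcongr)
      _ = 128 * exp (-‖q‖ / 4) * (‖q - p‖⁻¹ + 1) := by ring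
  by_cases hball : q - p ∈ ball (0 : ℝ³) 1
  · rw [indicator_of_mem hball]
    nlinarith [inv_nonneg.2 hd, exp_pos (-‖q‖ / 4)]
  · rw [indicator_of_notMem hball]
    have : ‖q - p‖⁻¹ ≤ 1 := inv_le_one_of_one_le₀ (by simpa using hball)
    nlinarith [exp_pos (-‖q‖ / 4)]

end LambdaKernel

lemma exists_eLpNorm_lambdaKernel_le {s : ℝ≥0∞} (hs1 : 1 ≤ s) (hs3 : s < 3) :
    ∃ M : ℝ≥0∞, M ≠ ∞ ∧ ∀ p : ℝ³, eLpNorm (lambdaKernel p) s volume ≤ M := by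
  set e : ℝ³ → ℝ := fun q => 256 * exp (-‖q‖ / 4)
  set B : ℝ³ → ℝ := fun x => 128 * (ball 0 1).indicator (fun x : ℝ³ => ‖x‖⁻¹) x
  have he : MemLp e s volume := by
    convert (memLp_exp_neg_mul_norm (volume : Measure ℝ³) (c := 1 / 4) (by norm_num) s).const_mul
      256 using 4
    ring
  have hB : MemLp B s volume :=
    (memLp_indicator_ball_norm_inv volume (by simpa using hs3) 1).const_mul 128
  refine ⟨eLpNorm e s volume + eLpNorm B s volume,
    ENNReal.add_ne_top.2 ⟨he.eLpNorm_ne_top, hB.eLpNorm_ne_top⟩, fun p => ?_⟩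
  have htrans := measurePreserving_sub_right (volume : Measure ℝ³) p
  calc eLpNorm (lambdaKernel p) s volume ≤ eLpNorm (e + B ∘ (· - p)) s volume :=
        eLpNorm_mono_real fun q => by
          rw [norm_of_nonneg (lambdaKernel_nonneg p q)]
          exact lambdaKernel_le_exp_add_indicator p q
    _ ≤ eLpNorm e s volume + eLpNorm (B ∘ (· - p)) s volume :=
        eLpNorm_add_le he.1 (hB.1.comp_measurePreserving htrans) hs1
    _ = eLpNorm e s volume + eLpNorm B s volume := by
        rw [eLpNorm_comp_measurePreserving hB.1 htrans]

/-- For `r ∈ (3/2, ∞]` there is `C = C(r) > 0` such that for every `g ∈ L^r(ℝ³)` and every `p`,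
`∫ (τ/(p₀q₀)) (τ² - 1)^{-1/2} e^{-q₀/2} |g(q)| dq ≤ C ‖g‖_{L^r}`. -/
theorem lambda_kernel_Lr_bound (r : ℝ≥0∞) (hr : 3 / 2 < r) :
    ∃ C : ℝ, 0 < C ∧ ∀ g : EuclideanSpace ℝ (Fin 3) → ℝ, MemLp g r volume →
      ∀ p : EuclideanSpace ℝ (Fin 3),
        (∫⁻ q, ENNReal.ofReal
            ((tauLor p q / (pZero p * pZero q)) * ((tauLor p q) ^ 2 - 1) ^ (-(1 / 2) : ℝ)
              * Real.exp (-(pZero q) / 2) * |g q|))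
          ≤ ENNReal.ofReal C * eLpNorm g r volume := by
  have hr1 : 1 ≤ r := le_trans (by rw [ENNReal.le_div_iff_mul_le] <;> norm_num) hr.le
  have hconj : r.conjExponent.HolderConjugate r := (ENNReal.HolderConjugate.conjExponent hr1).symm
  obtain ⟨M, hM, hK⟩ := exists_eLpNorm_lambdaKernel_le (ENNReal.HolderConjugate.one_le _ r)
    (ENNReal.conjExponent_lt_three hr)
  refine ⟨M.toReal + 1, by positivity, fun g hg p => ?_⟩
  calc _ = eLpNorm (lambdaKernel p • g) 1 volume := by
        rw [eLpNorm_one_eq_lintegral_enorm]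
        refine lintegral_congr fun q => ?_
        rw [Pi.smul_apply', smul_eq_mul, Real.enorm_eq_ofReal_abs, abs_mul,
          abs_of_nonneg (lambdaKernel_nonneg p q)]
        rfl
    _ ≤ eLpNorm (lambdaKernel p) r.conjExponent volume * eLpNorm g r volume :=
        eLpNorm_smul_le_mul_eLpNorm hg.1 (measurable_lambdaKernel p).aestronglyMeasurable
    _ ≤ ENNReal.ofReal (M.toReal + 1) * eLpNorm g r volume := by
        gcongr
        exact (hK p).trans ((ENNReal.ofReal_toReal hM).symm.trans_le
          (ENNReal.ofReal_le_ofReal (by linarith)))
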